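/- arXiv:1712.08218 — 6 statements merged into one kernel-verified Lean document; each statement's English description precedes it below -/
import Mathlib

section
/- Constancy of the second flux component at steady state (step in the proof of Theorem 2.1): if the interface data satisfy v^N = v^S = 0 and L^N = L^S = L̂ for a constant L̂, then the anti-diffusion term δ(ρv) vanishes and the second component of the well-balanced central-upwind flux, 𝒢^(2)_{k+1/2} = [b⁺(ρ^N(v^N)² + L^N) − b⁻(ρ^S(v^S)² + L^S)]/(b⁺−b⁻) + β((ρv)^S − (ρv)^N − δ(ρv)), equals L̂. -/
/-- Generalized minmod of two real numbers. -/
noncomputable def minmod2 (a b : ℝ) : ℝ :=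
  if 0 < a ∧ 0 < b then min a b
  else if a < 0 ∧ b < 0 then max a b
  else 0

/- STATEMENT 3: Constancy of the second flux component at steady state (step in the proof of
Theorem 2.1).  If the interface data satisfy `v^N = v^S = 0` and `L^N = L^S = L̂` for a
constant `L̂`, then the anti-diffusion term `δ(ρv)` vanishes and the second component of the
well-balanced central-upwind flux equals `L̂`. -/
theorem flux2_constant_at_steady_state
    (γ : ℝ) (hγ : 1 < γ)
    -- interface data
    (ρN ρS vN vS pN pS R φv : ℝ)
    (hρN : 0 < ρN) (hρS : 0 < ρS) (hpN : 0 < pN) (hpS : 0 < pS)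
    (LN LS EN ES ρφN ρφS cN cS bp bm β : ℝ)
    (hLN : LN = pN + R) (hLS : LS = pS + R)
    (hEN : EN = pN / (γ - 1) + ρN * vN ^ 2 / 2)
    (hES : ES = pS / (γ - 1) + ρS * vS ^ 2 / 2)
    (hρφN : ρφN = ρN * φv) (hρφS : ρφS = ρS * φv)
    (hcN : cN = Real.sqrt (γ * pN / ρN)) (hcS : cS = Real.sqrt (γ * pS / ρS))
    (hbp : bp = max (vN + cN) (max (vS + cS) 0))
    (hbm : bm = min (vN - cN) (min (vS - cS) 0))
    (hβ : β = bp * bm / (bp - bm))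
    -- anti-diffusion term for the momentum component
    (qstar2 δmv : ℝ)
    (hqstar2 : qstar2 = (bp * (ρS * vS) - bm * (ρN * vN) -
      ((ρS * vS ^ 2 + LS) - (ρN * vN ^ 2 + LN))) / (bp - bm))
    (hδmv : δmv = minmod2 (ρS * vS - qstar2) (qstar2 - ρN * vN))
    -- steady-state hypotheses
    (Lhat : ℝ)
    (hvN : vN = 0) (hvS : vS = 0) (hLNhat : LN = Lhat) (hLShat : LS = Lhat) :
    δmv = 0 ∧
    (bp * (ρN * vN ^ 2 + LN) - bm * (ρS * vS ^ 2 + LS)) / (bp - bm) +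
      β * (ρS * vS - ρN * vN - δmv) = Lhat := by
  have hcNpos : 0 < cN := by
    rw [hcN]
    exact Real.sqrt_pos.mpr (by positivity)
  have hbpos : 0 < bp - bm := by
    have h1 : 0 < bp := by
      rw [hbp, hvN]
      calc (0:ℝ) < cN := hcNpos
        _ = 0 + cN := by ring
        _ ≤ max (0 + cN) (max (vS + cS) 0) := le_max_left _ _
    have h2 : bm ≤ 0 := by
      rw [hbm]; exact min_le_of_right_le (min_le_right _ _)
    linarith
  subst hvN hvS hLNhat
  have hq : qstar2 = 0 := by
    rw [hqstar2, hLShat]; ring_nf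
  have hδ : δmv = 0 := by
    rw [hδmv, hq]
    simp [minmod2]
  refine ⟨hδ, ?_⟩
  rw [hδ, hLShat]
  field_simp
  ring
end

section
/- Vanishing of the third flux component at steady state (step in the proof of Theorem 2.1): if the interface data satisfy v^N = v^S = 0, L^N = L^S, and the adjacent cell-centered equilibrium values coincide, L_k = L_{k+1} (so that H(ψ_{k+1/2}) = 0), then the third component of the well-balanced central-upwind flux, 𝒢^(3)_{k+1/2} = [b⁺ v^N(E^N + (ρφ)^N + p^N) − b⁻ v^S(E^S + (ρφ)^S + p^S)]/(b⁺−b⁻) + β[E^S − E^N + H(ψ_{k+1/2})((ρφ)^S − (ρφ)^N − δ(E+ρφ))], equals 0; indeed the remaining term reduces via the equation of state to β(p^S − p^N)/(γ−1) = β(L^S − L^N)/(γ−1) = 0. -/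
/- STATEMENT 4: Vanishing of the third flux component at steady state (step in the proof of
Theorem 2.1).  If the interface data satisfy `v^N = v^S = 0`, `L^N = L^S`, and the adjacent
cell-centered equilibrium values coincide, `L_k = L_k1` (so that `H(ψ_{k+1/2}) = 0`), then
the third component of the well-balanced central-upwind flux equals `0`; indeed it reduces
via the equation of state to `β(p^S − p^N)/(γ−1) = β(L^S − L^N)/(γ−1) = 0`. -/
theorem flux3_vanishes_at_steady_state
    (γ : ℝ) (hγ : 1 < γ)
    -- interface data
    (ρN ρS vN vS pN pS R φv : ℝ)
    (hρN : 0 < ρN) (hρS : 0 < ρS) (hpN : 0 < pN) (hpS : 0 < pS)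
    (LN LS EN ES ρφN ρφS cN cS bp bm β : ℝ)
    (hLN : LN = pN + R) (hLS : LS = pS + R)
    (hEN : EN = pN / (γ - 1) + ρN * vN ^ 2 / 2)
    (hES : ES = pS / (γ - 1) + ρS * vS ^ 2 / 2)
    (hρφN : ρφN = ρN * φv) (hρφS : ρφS = ρS * φv)
    (hcN : cN = Real.sqrt (γ * pN / ρN)) (hcS : cS = Real.sqrt (γ * pS / ρS))
    (hbp : bp = max (vN + cN) (max (vS + cS) 0))
    (hbm : bm = min (vN - cN) (min (vS - cS) 0))
    (hβ : β = bp * bm / (bp - bm))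
    -- the cut-off function and its argument
    (H : ℝ → ℝ) (hH0 : H 0 = 0)
    (Lk Lk1 cfac ψ : ℝ) (hcfac : 0 ≤ cfac) (hψ : ψ = cfac * |Lk1 - Lk|)
    -- anti-diffusion term for the energy component
    (qstar3 δE : ℝ)
    (hqstar3 : qstar3 = (bp * (ES + ρφS) - bm * (EN + ρφN) -
      (vS * (ES + ρφS + pS) - vN * (EN + ρφN + pN))) / (bp - bm))
    (hδE : δE = minmod2 ((ES + ρφS) - qstar3) (qstar3 - (EN + ρφN)))
    -- steady-state hypotheses
    (hvN : vN = 0) (hvS : vS = 0) (hLNS : LN = LS) (hLcc : Lk = Lk1) :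
    ((bp * (vN * (EN + ρφN + pN)) - bm * (vS * (ES + ρφS + pS))) / (bp - bm) +
        β * (ES - EN + H ψ * (ρφS - ρφN - δE))
      = β * (pS - pN) / (γ - 1)) ∧
    ((bp * (vN * (EN + ρφN + pN)) - bm * (vS * (ES + ρφS + pS))) / (bp - bm) +
        β * (ES - EN + H ψ * (ρφS - ρφN - δE))
      = 0) := by
  have hp : pS = pN := by rw [hLN, hLS] at hLNS; linarith
  have hψ0 : ψ = 0 := by rw [hψ, hLcc]; simp
  have hE : ES = EN := by rw [hEN, hES, hp, hvN, hvS]; ring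
  constructor <;>
    simp [hψ0, hH0, hvN, hvS, hE, hp]
end

section
/- Well-balanced property of the 2-D central-upwind scheme (Theorem 3.1): suppose that at some time level all reconstructed interface point values of the velocities vanish, u^E_{j,k} = u^W_{j,k} = u^N_{j,k} = u^S_{j,k} = v^E_{j,k} = v^W_{j,k} = v^N_{j,k} = v^S_{j,k} = 0, and the equilibrium values satisfy K^E_{j,k} = K^W_{j,k} = K̂_k for all j (with cell-centered values K_{j,k} = K̂_k independent of j) and L^N_{j,k} = L^S_{j,k} = L̂_j for all k (with cell-centered values L_{j,k} = L̂_j independent of k). Then every x-flux equals ℱ_{j+1/2,k} = (0, K̂_k, 0, 0)ᵀ (depending only on k) and every y-flux equals 𝒢_{j,k+1/2} = (0, 0, L̂_j, 0)ᵀ (depending only on j), so the right-hand side of the semi-discrete scheme d q̄_{j,k}/dt = −(ℱ_{j+1/2,k} − ℱ_{j−1/2,k})/Δx − (𝒢_{j,k+1/2} − 𝒢_{j,k−1/2})/Δy vanishes identically: the 2-D motionless steady state u ≡ v ≡ 0, K_x ≡ 0, L_y ≡ 0 is exactly preserved. -/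
/- STATEMENT 5 (Theorem 3.1): Well-balanced property of the 2-D central-upwind scheme.
Suppose all reconstructed interface point values of the velocities vanish and the equilibrium
point values satisfy `K^E_{j,k} = K^W_{j,k} = K̂_k` (with cell-centered values
`K_{j,k} = K̂_k` independent of `j`) and `L^N_{j,k} = L^S_{j,k} = L̂_j` (with cell-centered
values `L_{j,k} = L̂_j` independent of `k`).  Then every x-flux equals
`ℱ_{j+1/2,k} = (0, K̂_k, 0, 0)ᵀ`, every y-flux equals `𝒢_{j,k+1/2} = (0, 0, L̂_j, 0)ᵀ`, and
the right-hand side of the semi-discrete scheme vanishes identically.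

Indexing convention: `Qif j k = Q_{j+1/2,k}`, `Rif j k = R_{j,k+1/2}`,
`φxif j k = φ(x_{j+1/2},y_k)`, `φyif j k = φ(x_j,y_{k+1/2})`; `F1..F4 j k` are the
components of `ℱ_{j+1/2,k}` and `G1..G4 j k` those of `𝒢_{j,k+1/2}`. -/
theorem wellBalanced_CU_scheme_2D
    (γ Δx Δy : ℝ) (hγ : 1 < γ) (hΔx : 0 < Δx) (hΔy : 0 < Δy)
    (H : ℝ → ℝ) (hH0 : H 0 = 0)
    (Khat Lhat : ℤ → ℝ)
    -- reconstructed interface point values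
    (ρE ρW ρN ρS uE uW uN uS vE vW vN vS : ℤ → ℤ → ℝ)
    (KE KW LNv LSv Kc Lc Qif Rif φxif φyif : ℤ → ℤ → ℝ)
    -- nonnegative normalization factors in the cut-off arguments
    (cx cy : ℤ → ℤ → ℝ) (hcx : ∀ j k, 0 ≤ cx j k) (hcy : ∀ j k, 0 ≤ cy j k)
    -- derived interface quantities
    (pE pW pN pS EE EW EN ES ρφE ρφW ρφN ρφS cE cW cN cS : ℤ → ℤ → ℝ)
    (hpE : ∀ j k, pE j k = KE j k - Qif j k)
    (hpW : ∀ j k, pW j k = KW j k - Qif (j - 1) k)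
    (hpN : ∀ j k, pN j k = LNv j k - Rif j k)
    (hpS : ∀ j k, pS j k = LSv j k - Rif j (k - 1))
    (hEE : ∀ j k, EE j k = pE j k / (γ - 1) + ρE j k * ((uE j k) ^ 2 + (vE j k) ^ 2) / 2)
    (hEW : ∀ j k, EW j k = pW j k / (γ - 1) + ρW j k * ((uW j k) ^ 2 + (vW j k) ^ 2) / 2)
    (hEN : ∀ j k, EN j k = pN j k / (γ - 1) + ρN j k * ((uN j k) ^ 2 + (vN j k) ^ 2) / 2)
    (hES : ∀ j k, ES j k = pS j k / (γ - 1) + ρS j k * ((uS j k) ^ 2 + (vS j k) ^ 2) / 2)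
    (hρφE : ∀ j k, ρφE j k = ρE j k * φxif j k)
    (hρφW : ∀ j k, ρφW j k = ρW j k * φxif (j - 1) k)
    (hρφN : ∀ j k, ρφN j k = ρN j k * φyif j k)
    (hρφS : ∀ j k, ρφS j k = ρS j k * φyif j (k - 1))
    (hcE : ∀ j k, cE j k = Real.sqrt (γ * pE j k / ρE j k))
    (hcW : ∀ j k, cW j k = Real.sqrt (γ * pW j k / ρW j k))
    (hcN : ∀ j k, cN j k = Real.sqrt (γ * pN j k / ρN j k))
    (hcS : ∀ j k, cS j k = Real.sqrt (γ * pS j k / ρS j k))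
    -- one-sided local speeds
    (ap am bp bm α β ψx ψy : ℤ → ℤ → ℝ)
    (hap : ∀ j k, ap j k = max (uE j k + cE j k) (max (uW (j + 1) k + cW (j + 1) k) 0))
    (ham : ∀ j k, am j k = min (uE j k - cE j k) (min (uW (j + 1) k - cW (j + 1) k) 0))
    (hbp : ∀ j k, bp j k = max (vN j k + cN j k) (max (vS j (k + 1) + cS j (k + 1)) 0))
    (hbm : ∀ j k, bm j k = min (vN j k - cN j k) (min (vS j (k + 1) - cS j (k + 1)) 0))
    (hα : ∀ j k, α j k = ap j k * am j k / (ap j k - am j k))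
    (hβ : ∀ j k, β j k = bp j k * bm j k / (bp j k - bm j k))
    (hψx : ∀ j k, ψx j k = cx j k * |Kc (j + 1) k - Kc j k|)
    (hψy : ∀ j k, ψy j k = cy j k * |Lc j (k + 1) - Lc j k|)
    -- intermediate states and anti-diffusion terms in the x-direction
    (xstar1 xstar2 xstar3 xstar4 δx1 δx2 δx3 δx4 : ℤ → ℤ → ℝ)
    (hxstar1 : ∀ j k, xstar1 j k = (ap j k * ρW (j + 1) k - am j k * ρE j k -
      (ρW (j + 1) k * uW (j + 1) k - ρE j k * uE j k)) / (ap j k - am j k))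
    (hxstar2 : ∀ j k, xstar2 j k =
      (ap j k * (ρW (j + 1) k * uW (j + 1) k) - am j k * (ρE j k * uE j k) -
        ((ρW (j + 1) k * (uW (j + 1) k) ^ 2 + KW (j + 1) k) -
          (ρE j k * (uE j k) ^ 2 + KE j k))) / (ap j k - am j k))
    (hxstar3 : ∀ j k, xstar3 j k =
      (ap j k * (ρW (j + 1) k * vW (j + 1) k) - am j k * (ρE j k * vE j k) -
        (ρW (j + 1) k * uW (j + 1) k * vW (j + 1) k - ρE j k * uE j k * vE j k)) /
        (ap j k - am j k))
    (hxstar4 : ∀ j k, xstar4 j k =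
      (ap j k * (EW (j + 1) k + ρφW (j + 1) k) - am j k * (EE j k + ρφE j k) -
        (uW (j + 1) k * (EW (j + 1) k + ρφW (j + 1) k + pW (j + 1) k) -
          uE j k * (EE j k + ρφE j k + pE j k))) / (ap j k - am j k))
    (hδx1 : ∀ j k, δx1 j k = minmod2 (ρW (j + 1) k - xstar1 j k) (xstar1 j k - ρE j k))
    (hδx2 : ∀ j k, δx2 j k =
      minmod2 (ρW (j + 1) k * uW (j + 1) k - xstar2 j k) (xstar2 j k - ρE j k * uE j k))
    (hδx3 : ∀ j k, δx3 j k =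
      minmod2 (ρW (j + 1) k * vW (j + 1) k - xstar3 j k) (xstar3 j k - ρE j k * vE j k))
    (hδx4 : ∀ j k, δx4 j k =
      minmod2 ((EW (j + 1) k + ρφW (j + 1) k) - xstar4 j k)
        (xstar4 j k - (EE j k + ρφE j k)))
    -- intermediate states and anti-diffusion terms in the y-direction
    (ystar1 ystar2 ystar3 ystar4 δy1 δy2 δy3 δy4 : ℤ → ℤ → ℝ)
    (hystar1 : ∀ j k, ystar1 j k = (bp j k * ρS j (k + 1) - bm j k * ρN j k -
      (ρS j (k + 1) * vS j (k + 1) - ρN j k * vN j k)) / (bp j k - bm j k))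
    (hystar2 : ∀ j k, ystar2 j k =
      (bp j k * (ρS j (k + 1) * uS j (k + 1)) - bm j k * (ρN j k * uN j k) -
        (ρS j (k + 1) * uS j (k + 1) * vS j (k + 1) - ρN j k * uN j k * vN j k)) /
        (bp j k - bm j k))
    (hystar3 : ∀ j k, ystar3 j k =
      (bp j k * (ρS j (k + 1) * vS j (k + 1)) - bm j k * (ρN j k * vN j k) -
        ((ρS j (k + 1) * (vS j (k + 1)) ^ 2 + LSv j (k + 1)) -
          (ρN j k * (vN j k) ^ 2 + LNv j k))) / (bp j k - bm j k))
    (hystar4 : ∀ j k, ystar4 j k =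
      (bp j k * (ES j (k + 1) + ρφS j (k + 1)) - bm j k * (EN j k + ρφN j k) -
        (vS j (k + 1) * (ES j (k + 1) + ρφS j (k + 1) + pS j (k + 1)) -
          vN j k * (EN j k + ρφN j k + pN j k))) / (bp j k - bm j k))
    (hδy1 : ∀ j k, δy1 j k = minmod2 (ρS j (k + 1) - ystar1 j k) (ystar1 j k - ρN j k))
    (hδy2 : ∀ j k, δy2 j k =
      minmod2 (ρS j (k + 1) * uS j (k + 1) - ystar2 j k) (ystar2 j k - ρN j k * uN j k))
    (hδy3 : ∀ j k, δy3 j k =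
      minmod2 (ρS j (k + 1) * vS j (k + 1) - ystar3 j k) (ystar3 j k - ρN j k * vN j k))
    (hδy4 : ∀ j k, δy4 j k =
      minmod2 ((ES j (k + 1) + ρφS j (k + 1)) - ystar4 j k)
        (ystar4 j k - (EN j k + ρφN j k)))
    -- the numerical fluxes
    (F1 F2 F3 F4 G1 G2 G3 G4 : ℤ → ℤ → ℝ)
    (hF1 : ∀ j k, F1 j k =
      (ap j k * (ρE j k * uE j k) - am j k * (ρW (j + 1) k * uW (j + 1) k)) /
        (ap j k - am j k) +
      α j k * H (ψx j k) * (ρW (j + 1) k - ρE j k - δx1 j k))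
    (hF2 : ∀ j k, F2 j k =
      (ap j k * (ρE j k * (uE j k) ^ 2 + KE j k) -
        am j k * (ρW (j + 1) k * (uW (j + 1) k) ^ 2 + KW (j + 1) k)) / (ap j k - am j k) +
      α j k * (ρW (j + 1) k * uW (j + 1) k - ρE j k * uE j k - δx2 j k))
    (hF3 : ∀ j k, F3 j k =
      (ap j k * (ρE j k * uE j k * vE j k) -
        am j k * (ρW (j + 1) k * uW (j + 1) k * vW (j + 1) k)) / (ap j k - am j k) +
      α j k * (ρW (j + 1) k * vW (j + 1) k - ρE j k * vE j k - δx3 j k))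
    (hF4 : ∀ j k, F4 j k =
      (ap j k * (uE j k * (EE j k + ρφE j k + pE j k)) -
        am j k * (uW (j + 1) k * (EW (j + 1) k + ρφW (j + 1) k + pW (j + 1) k))) /
        (ap j k - am j k) +
      α j k * (EW (j + 1) k - EE j k +
        H (ψx j k) * (ρφW (j + 1) k - ρφE j k - δx4 j k)))
    (hG1 : ∀ j k, G1 j k =
      (bp j k * (ρN j k * vN j k) - bm j k * (ρS j (k + 1) * vS j (k + 1))) /
        (bp j k - bm j k) +
      β j k * H (ψy j k) * (ρS j (k + 1) - ρN j k - δy1 j k))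
    (hG2 : ∀ j k, G2 j k =
      (bp j k * (ρN j k * uN j k * vN j k) -
        bm j k * (ρS j (k + 1) * uS j (k + 1) * vS j (k + 1))) / (bp j k - bm j k) +
      β j k * (ρS j (k + 1) * uS j (k + 1) - ρN j k * uN j k - δy2 j k))
    (hG3 : ∀ j k, G3 j k =
      (bp j k * (ρN j k * (vN j k) ^ 2 + LNv j k) -
        bm j k * (ρS j (k + 1) * (vS j (k + 1)) ^ 2 + LSv j (k + 1))) / (bp j k - bm j k) +
      β j k * (ρS j (k + 1) * vS j (k + 1) - ρN j k * vN j k - δy3 j k))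
    (hG4 : ∀ j k, G4 j k =
      (bp j k * (vN j k * (EN j k + ρφN j k + pN j k)) -
        bm j k * (vS j (k + 1) * (ES j (k + 1) + ρφS j (k + 1) + pS j (k + 1)))) /
        (bp j k - bm j k) +
      β j k * (ES j (k + 1) - EN j k +
        H (ψy j k) * (ρφS j (k + 1) - ρφN j k - δy4 j k)))
    -- positivity of densities and pressures
    (hρEpos : ∀ j k, 0 < ρE j k) (hρWpos : ∀ j k, 0 < ρW j k)
    (hρNpos : ∀ j k, 0 < ρN j k) (hρSpos : ∀ j k, 0 < ρS j k)
    (hpEpos : ∀ j k, 0 < pE j k) (hpWpos : ∀ j k, 0 < pW j k)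
    (hpNpos : ∀ j k, 0 < pN j k) (hpSpos : ∀ j k, 0 < pS j k)
    -- steady-state hypotheses
    (huE : ∀ j k, uE j k = 0) (huW : ∀ j k, uW j k = 0)
    (huN : ∀ j k, uN j k = 0) (huS : ∀ j k, uS j k = 0)
    (hvE : ∀ j k, vE j k = 0) (hvW : ∀ j k, vW j k = 0)
    (hvN : ∀ j k, vN j k = 0) (hvS : ∀ j k, vS j k = 0)
    (hKE : ∀ j k, KE j k = Khat k) (hKW : ∀ j k, KW j k = Khat k)
    (hKc : ∀ j k, Kc j k = Khat k)
    (hLN : ∀ j k, LNv j k = Lhat j) (hLS : ∀ j k, LSv j k = Lhat j)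
    (hLc : ∀ j k, Lc j k = Lhat j) :
    -- conclusions
    (∀ j k, F1 j k = 0 ∧ F2 j k = Khat k ∧ F3 j k = 0 ∧ F4 j k = 0) ∧
    (∀ j k, G1 j k = 0 ∧ G2 j k = 0 ∧ G3 j k = Lhat j ∧ G4 j k = 0) ∧
    (∀ j k,
      -(F1 j k - F1 (j - 1) k) / Δx - (G1 j k - G1 j (k - 1)) / Δy = 0 ∧
      -(F2 j k - F2 (j - 1) k) / Δx - (G2 j k - G2 j (k - 1)) / Δy = 0 ∧
      -(F3 j k - F3 (j - 1) k) / Δx - (G3 j k - G3 j (k - 1)) / Δy = 0 ∧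
      -(F4 j k - F4 (j - 1) k) / Δx - (G4 j k - G4 j (k - 1)) / Δy = 0) := by
  have hγ0 : (0:ℝ) < γ := lt_trans one_pos hγ
  have hcEpos : ∀ j k, 0 < cE j k := fun j k => by
    rw [hcE]
    have := hpEpos j k; have := hρEpos j k
    exact Real.sqrt_pos.mpr (by positivity)
  have hcNpos : ∀ j k, 0 < cN j k := fun j k => by
    rw [hcN]
    have := hpNpos j k; have := hρNpos j k
    exact Real.sqrt_pos.mpr (by positivity)
  have hapos : ∀ j k, 0 < ap j k - am j k := by
    intro j k
    have h1 : uE j k + cE j k ≤ ap j k := by rw [hap]; exact le_max_left _ _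
    have h2 : am j k ≤ 0 := by
      rw [ham]; exact le_trans (min_le_right _ _) (min_le_right _ _)
    have := hcEpos j k
    have := huE j k
    linarith
  have hbpos : ∀ j k, 0 < bp j k - bm j k := by
    intro j k
    have h1 : vN j k + cN j k ≤ bp j k := by rw [hbp]; exact le_max_left _ _
    have h2 : bm j k ≤ 0 := by
      rw [hbm]; exact le_trans (min_le_right _ _) (min_le_right _ _)
    have := hcNpos j k
    have := hvN j k
    linarith
  have hane : ∀ j k, ap j k - am j k ≠ 0 := fun j k => ne_of_gt (hapos j k)
  have hbne : ∀ j k, bp j k - bm j k ≠ 0 := fun j k => ne_of_gt (hbpos j k)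
  have hHx : ∀ j k, H (ψx j k) = 0 := fun j k => by
    rw [hψx, hKc, hKc, sub_self, abs_zero, mul_zero, hH0]
  have hHy : ∀ j k, H (ψy j k) = 0 := fun j k => by
    rw [hψy, hLc, hLc, sub_self, abs_zero, mul_zero, hH0]
  have hmm0 : minmod2 0 0 = 0 := by simp [minmod2]
  -- energy equality across x-interfaces
  have hExeq : ∀ j k, EW (j + 1) k = EE j k := by
    intro j k
    rw [hEW, hEE, hpW, hpE, huW, huE, hvW, hvE, hKW, hKE]
    simp
  have hEyeq : ∀ j k, ES j (k + 1) = EN j k := by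
    intro j k
    rw [hES, hEN, hpS, hpN, hvS, hvN, huS, huN, hLS, hLN]
    simp
  -- x-flux values
  have hF1v : ∀ j k, F1 j k = 0 := by
    intro j k
    rw [hF1, huE, huW, hHx]
    simp
  have hxstar2z : ∀ j k, xstar2 j k = 0 := by
    intro j k
    rw [hxstar2, huE, huW, hKE, hKW]
    simp
  have hF2v : ∀ j k, F2 j k = Khat k := by
    intro j k
    rw [hF2, hδx2, hxstar2z, huE, huW, hKE, hKW]
    simp [hmm0]
    rw [show ap j k * Khat k - am j k * Khat k = Khat k * (ap j k - am j k) by ring,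
      mul_div_assoc, div_self (hane j k), mul_one]
  have hxstar3z : ∀ j k, xstar3 j k = 0 := by
    intro j k
    rw [hxstar3, huE, huW, hvE, hvW]
    simp
  have hF3v : ∀ j k, F3 j k = 0 := by
    intro j k
    rw [hF3, hδx3, hxstar3z, huE, huW, hvE, hvW]
    simp [hmm0]
  have hF4v : ∀ j k, F4 j k = 0 := by
    intro j k
    rw [hF4, huE, huW, hHx, hExeq]
    simp
  -- y-flux values
  have hG1v : ∀ j k, G1 j k = 0 := by
    intro j k
    rw [hG1, hvN, hvS, hHy]
    simp
  have hystar2z : ∀ j k, ystar2 j k = 0 := by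
    intro j k
    rw [hystar2, huN, huS, hvN, hvS]
    simp
  have hG2v : ∀ j k, G2 j k = 0 := by
    intro j k
    rw [hG2, hδy2, hystar2z, huN, huS, hvN, hvS]
    simp [hmm0]
  have hystar3z : ∀ j k, ystar3 j k = 0 := by
    intro j k
    rw [hystar3, hvN, hvS, hLN, hLS]
    simp
  have hG3v : ∀ j k, G3 j k = Lhat j := by
    intro j k
    rw [hG3, hδy3, hystar3z, hvN, hvS, hLN, hLS]
    simp [hmm0]
    rw [show bp j k * Lhat j - bm j k * Lhat j = Lhat j * (bp j k - bm j k) by ring,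
      mul_div_assoc, div_self (hbne j k), mul_one]
  have hG4v : ∀ j k, G4 j k = 0 := by
    intro j k
    rw [hG4, hvN, hvS, hHy, hEyeq]
    simp
  refine ⟨fun j k => ⟨hF1v j k, hF2v j k, hF3v j k, hF4v j k⟩,
    fun j k => ⟨hG1v j k, hG2v j k, hG3v j k, hG4v j k⟩, fun j k => ?_⟩
  refine ⟨?_, ?_, ?_, ?_⟩
  · rw [hF1v, hF1v, hG1v, hG1v]; simp
  · rw [hF2v, hF2v, hG2v, hG2v]; simp
  · rw [hF3v, hF3v, hG3v, hG3v]; simp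
  · rw [hF4v, hF4v, hG4v, hG4v]; simp
end

section
/- Constancy of the x-momentum flux in 2-D at steady state (step in the proof of Theorem 3.1): if at an x-interface u^E_{j,k} = u^W_{j+1,k} = 0 and K^E_{j,k} = K^W_{j+1,k} = K̂ for a constant K̂, then the anti-diffusion term δ(ρu)_{j+1/2,k} vanishes and the second flux component ℱ^(2)_{j+1/2,k} = [a⁺(ρ^E(u^E)² + K^E) − a⁻(ρ^W(u^W)² + K^W)]/(a⁺−a⁻) + α((ρu)^W − (ρu)^E − δ(ρu)_{j+1/2,k}) equals K̂. -/
/- STATEMENT 7: Constancy of the x-momentum flux in 2-D at steady state (step in the proof of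
Theorem 3.1).  If at an x-interface `u^E_{j,k} = u^W_{j+1,k} = 0` and
`K^E_{j,k} = K^W_{j+1,k} = K̂` for a constant `K̂`, then the anti-diffusion term
`δ(ρu)_{j+1/2,k}` vanishes and the second flux component `ℱ^(2)_{j+1/2,k}` equals `K̂`. -/
theorem xMomentum_flux_constant_2D
    (γ : ℝ) (hγ : 1 < γ)
    -- x-interface data (E side from cell (j,k), W side from cell (j+1,k))
    (ρE ρW uE uW vE vW pE pW Q φv : ℝ)
    (hρE : 0 < ρE) (hρW : 0 < ρW) (hpE : 0 < pE) (hpW : 0 < pW)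
    (KE KW EE EW ρφE ρφW cE cW ap am α : ℝ)
    (hKE : KE = pE + Q) (hKW : KW = pW + Q)
    (hEE : EE = pE / (γ - 1) + ρE * (uE ^ 2 + vE ^ 2) / 2)
    (hEW : EW = pW / (γ - 1) + ρW * (uW ^ 2 + vW ^ 2) / 2)
    (hρφE : ρφE = ρE * φv) (hρφW : ρφW = ρW * φv)
    (hcE : cE = Real.sqrt (γ * pE / ρE)) (hcW : cW = Real.sqrt (γ * pW / ρW))
    (hap : ap = max (uE + cE) (max (uW + cW) 0))
    (ham : am = min (uE - cE) (min (uW - cW) 0))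
    (hα : α = ap * am / (ap - am))
    -- anti-diffusion term for the x-momentum component
    (xstar2 δmu : ℝ)
    (hxstar2 : xstar2 = (ap * (ρW * uW) - am * (ρE * uE) -
      ((ρW * uW ^ 2 + KW) - (ρE * uE ^ 2 + KE))) / (ap - am))
    (hδmu : δmu = minmod2 (ρW * uW - xstar2) (xstar2 - ρE * uE))
    -- steady-state hypotheses
    (Khat : ℝ)
    (huE : uE = 0) (huW : uW = 0) (hKEhat : KE = Khat) (hKWhat : KW = Khat) :
    δmu = 0 ∧
    (ap * (ρE * uE ^ 2 + KE) - am * (ρW * uW ^ 2 + KW)) / (ap - am) +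
      α * (ρW * uW - ρE * uE - δmu) = Khat := by
  have hcEpos : 0 < cE := by
    rw [hcE]
    exact Real.sqrt_pos.2 (by positivity)
  have hapos : 0 < ap := lt_of_lt_of_le (by rw [huE]; simpa using hcEpos)
    (hap ▸ le_max_left _ _)
  have hamle : am ≤ 0 := ham ▸ le_trans (min_le_right _ _) (min_le_right _ _)
  have hden : 0 < ap - am := by linarith
  have hx : xstar2 = 0 := by
    rw [hxstar2, huE, huW, hKEhat, hKWhat]; ring
  have hδ : δmu = 0 := by
    rw [hδmu, hx, huE, huW, minmod2]
    simp
  refine ⟨hδ, ?_⟩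
  rw [hδ, huE, huW, hKEhat, hKWhat]
  field_simp
  ring
end

section
/- Equivalence of the 1-D Euler system with gravitational source and its purely conservative global-flux reformulation: let ρ, v, p : [a,b] × [0,T] → ℝ be C¹ with ρ > 0, let φ : [a,b] → ℝ be C¹ and time-independent, set E = p/(γ−1) + ρv²/2, R(y,t) = ∫_a^y ρ(ξ,t) φ'(ξ) dξ, and L = p + R. Assume the mass equation ρ_t + (ρv)_y = 0 holds on [a,b] × [0,T]. Then at every point: (i) the momentum balance (ρv)_t + (ρv² + p)_y = −ρφ' holds if and only if the conservative momentum equation (ρv)_t + (ρv² + L)_y = 0 holds; and (ii) the energy balance E_t + (v(E + p))_y = −ρvφ' holds if and only if the conservative energy equation (E + ρφ)_t + (v(E + ρφ + p))_y = 0 holds. -/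
/-! Both equivalences are pointwise identities between the two left-hand sides.  For the momentum
equation, the fundamental theorem of calculus gives `∂_y R = ρ φ'`, so the conservative flux
differs from the balance-law flux by exactly the source term.  For the energy equation, since `φ`
does not depend on time, `(ρφ)_t + (ρvφ)_y = φ (ρ_t + (ρv)_y) + ρvφ'`, and the bracket vanishes by
the mass equation. -/

section Sections

variable {𝕜 E F G : Type*} [NontriviallyNormedField 𝕜] [NormedAddCommGroup E] [NormedSpace 𝕜 E]
  [NormedAddCommGroup F] [NormedSpace 𝕜 F] [NormedAddCommGroup G] [NormedSpace 𝕜 G]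
  {f : E → F → G}

theorem Differentiable.of_uncurry_left (hf : Differentiable 𝕜 (fun z : E × F => f z.1 z.2))
    (t : F) : Differentiable 𝕜 (fun x => f x t) :=
  hf.comp (differentiable_id.prodMk (differentiable_const t))

theorem Differentiable.of_uncurry_right (hf : Differentiable 𝕜 (fun z : E × F => f z.1 z.2))
    (x : E) : Differentiable 𝕜 (fun t => f x t) :=
  hf.comp ((differentiable_const x).prodMk differentiable_id)

end Sections

theorem balance_iff_add_integral_flux {F g : ℝ → ℝ} {a y m : ℝ} (hF : DifferentiableAt ℝ F y)
    (hg : Continuous g) :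
    m + deriv F y = -g y ↔ m + deriv (fun ξ => F ξ + ∫ ζ in a..ξ, g ζ) y = 0 := by
  have hint := (hg.integral_hasStrictDerivAt a y).hasDerivAt
  rw [deriv_fun_add hF hint.differentiableAt, hint.deriv]
  constructor <;> intro h <;> linarith

theorem deriv_energy_add_potential {ρ v E p : ℝ → ℝ → ℝ} {φ : ℝ → ℝ} {y t : ℝ}
    (hEt : DifferentiableAt ℝ (fun τ => E y τ) t) (hρt : DifferentiableAt ℝ (fun τ => ρ y τ) t)
    (hflux : DifferentiableAt ℝ (fun ξ => v ξ t * (E ξ t + p ξ t)) y)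
    (hmom : DifferentiableAt ℝ (fun ξ => ρ ξ t * v ξ t) y) (hφ : DifferentiableAt ℝ φ y) :
    deriv (fun τ => E y τ + ρ y τ * φ y) t +
        deriv (fun ξ => v ξ t * (E ξ t + ρ ξ t * φ ξ + p ξ t)) y =
      deriv (fun τ => E y τ) t + deriv (fun ξ => v ξ t * (E ξ t + p ξ t)) y +
        (deriv (fun τ => ρ y τ) t + deriv (fun ξ => ρ ξ t * v ξ t) y) * φ y +
        ρ y t * v y t * deriv φ y := by
  have hsplit : (fun ξ => v ξ t * (E ξ t + ρ ξ t * φ ξ + p ξ t)) =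
      fun ξ => v ξ t * (E ξ t + p ξ t) + ρ ξ t * v ξ t * φ ξ :=
    funext fun ξ => by ring
  rw [hsplit, deriv_fun_add hEt (hρt.mul_const _), deriv_mul_const hρt,
    deriv_fun_add hflux (hmom.fun_mul hφ), deriv_fun_mul hmom hφ]
  ring

theorem global_flux_reformulation_1D_general
    (γ T a b : ℝ)
    (ρ v p : ℝ → ℝ → ℝ) (φ : ℝ → ℝ)
    (hρ : ContDiff ℝ 1 (fun z : ℝ × ℝ => ρ z.1 z.2))
    (hv : ContDiff ℝ 1 (fun z : ℝ × ℝ => v z.1 z.2))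
    (hp : ContDiff ℝ 1 (fun z : ℝ × ℝ => p z.1 z.2))
    (hφ : ContDiff ℝ 1 φ)
    (E R L : ℝ → ℝ → ℝ)
    (hE : ∀ y t, E y t = p y t / (γ - 1) + ρ y t * (v y t) ^ 2 / 2)
    (hR : ∀ y t, R y t = ∫ ξ in a..y, ρ ξ t * deriv φ ξ)
    (hL : ∀ y t, L y t = p y t + R y t)
    (hmass : ∀ y ∈ Set.Icc a b, ∀ t ∈ Set.Icc 0 T,
      deriv (fun τ => ρ y τ) t + deriv (fun ξ => ρ ξ t * v ξ t) y = 0) :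
    ∀ y ∈ Set.Icc a b, ∀ t ∈ Set.Icc 0 T,
      ((deriv (fun τ => ρ y τ * v y τ) t +
          deriv (fun ξ => ρ ξ t * (v ξ t) ^ 2 + p ξ t) y = -(ρ y t * deriv φ y))
        ↔ (deriv (fun τ => ρ y τ * v y τ) t +
          deriv (fun ξ => ρ ξ t * (v ξ t) ^ 2 + L ξ t) y = 0)) ∧
      ((deriv (fun τ => E y τ) t +
          deriv (fun ξ => v ξ t * (E ξ t + p ξ t)) y = -(ρ y t * v y t * deriv φ y))
        ↔ (deriv (fun τ => E y τ + ρ y τ * φ y) t +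
          deriv (fun ξ => v ξ t * (E ξ t + ρ ξ t * φ ξ + p ξ t)) y = 0)) := by
  intro y hy t ht
  have hρd := hρ.differentiable one_ne_zero
  have hvd := hv.differentiable one_ne_zero
  have hpd := hp.differentiable one_ne_zero
  have hφd := hφ.differentiable one_ne_zero
  have hEd : Differentiable ℝ (fun z : ℝ × ℝ => E z.1 z.2) := by
    simp only [hE]
    fun_prop
  have hρy := hρd.of_uncurry_left t
  have hvy := hvd.of_uncurry_left t
  have hpy := hpd.of_uncurry_left t
  have hEy := hEd.of_uncurry_left t
  have hL' : (fun ξ => ρ ξ t * v ξ t ^ 2 + L ξ t) =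
      fun ξ => (ρ ξ t * v ξ t ^ 2 + p ξ t) + ∫ ζ in a..ξ, ρ ζ t * deriv φ ζ :=
    funext fun ξ => by rw [hL, hR]; ring
  refine ⟨?_, ?_⟩
  · rw [hL']
    exact balance_iff_add_integral_flux (g := fun ξ => ρ ξ t * deriv φ ξ) (by fun_prop)
      (hρy.continuous.mul (hφ.continuous_deriv le_rfl))
  · rw [deriv_energy_add_potential (hEd.of_uncurry_right y t) (hρd.of_uncurry_right y t)
      (by fun_prop) (by fun_prop) (hφd y), hmass y hy t ht]
    constructor <;> intro h <;> linarith

theorem global_flux_reformulation_1D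
    (γ T a b : ℝ) (hγ : 1 < γ) (hT : 0 < T) (hab : a < b)
    (ρ v p : ℝ → ℝ → ℝ) (φ : ℝ → ℝ)
    (hρ : ContDiff ℝ 1 (fun z : ℝ × ℝ => ρ z.1 z.2))
    (hv : ContDiff ℝ 1 (fun z : ℝ × ℝ => v z.1 z.2))
    (hp : ContDiff ℝ 1 (fun z : ℝ × ℝ => p z.1 z.2))
    (hφ : ContDiff ℝ 1 φ)
    (hρpos : ∀ y ∈ Set.Icc a b, ∀ t ∈ Set.Icc 0 T, 0 < ρ y t)
    (E R L : ℝ → ℝ → ℝ)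
    (hE : ∀ y t, E y t = p y t / (γ - 1) + ρ y t * (v y t) ^ 2 / 2)
    (hR : ∀ y t, R y t = ∫ ξ in a..y, ρ ξ t * deriv φ ξ)
    (hL : ∀ y t, L y t = p y t + R y t)
    (hmass : ∀ y ∈ Set.Icc a b, ∀ t ∈ Set.Icc 0 T,
      deriv (fun τ => ρ y τ) t + deriv (fun ξ => ρ ξ t * v ξ t) y = 0) :
    ∀ y ∈ Set.Icc a b, ∀ t ∈ Set.Icc 0 T,
      ((deriv (fun τ => ρ y τ * v y τ) t +
          deriv (fun ξ => ρ ξ t * (v ξ t) ^ 2 + p ξ t) y = -(ρ y t * deriv φ y))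
        ↔ (deriv (fun τ => ρ y τ * v y τ) t +
          deriv (fun ξ => ρ ξ t * (v ξ t) ^ 2 + L ξ t) y = 0)) ∧
      ((deriv (fun τ => E y τ) t +
          deriv (fun ξ => v ξ t * (E ξ t + p ξ t)) y = -(ρ y t * v y t * deriv φ y))
        ↔ (deriv (fun τ => E y τ + ρ y τ * φ y) t +
          deriv (fun ξ => v ξ t * (E ξ t + ρ ξ t * φ ξ + p ξ t)) y = 0)) :=
  global_flux_reformulation_1D_general γ T a b ρ v p φ hρ hv hp hφ E R L hE hR hL hmass
end

section
/- Lack of well-balancing of the unmodified central-upwind scheme (Section 2.1): suppose the interface data satisfy v^N = v^S = 0, with positive densities and pressures (so the sound speeds c^N, c^S are positive). Then the one-sided local speeds satisfy b⁺ = −b⁻ = max(c^N, c^S) > 0; moreover the anti-diffusion term δ(ρv) vanishes, and the second component of the unmodified central-upwind flux 𝒢^(2) = [b⁺(ρ^N(v^N)² + L^N) − b⁻(ρ^S(v^S)² + L^S)]/(b⁺−b⁻) + β((ρv)^S − (ρv)^N − δ(ρv)) reduces to 𝒢^(2) = (L^N + L^S)/2, so that the semi-discrete momentum equation becomes d(ρ̄v)_k/dt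 = −[(L^S_{k+1} + L^N_k) − (L^S_k + L^N_{k−1})]/(2Δy), which is in general nonzero when L is not locally constant. -/
/- STATEMENT 19: Lack of well-balancing of the unmodified central-upwind scheme
(Section 2.1).  If the interface data satisfy `v^N = v^S = 0` with positive densities and
pressures, then `b⁺ = −b⁻ = max(c^N, c^S) > 0`, the anti-diffusion term `δ(ρv)` vanishes,
and the second component of the unmodified central-upwind flux reduces to
`𝒢^(2) = (L^N + L^S)/2`, so that the semi-discrete momentum equation becomes
`d(ρ̄v)_k/dt = −[(L^S_{k+1} + L^N_k) − (L^S_k + L^N_{k−1})]/(2Δy)`, which is in general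
nonzero when `L` is not locally constant. -/
theorem lack_of_well_balancing
    (γ : ℝ) (hγ : 1 < γ)
    -- interface data
    (ρN ρS vN vS pN pS R : ℝ)
    (hρN : 0 < ρN) (hρS : 0 < ρS) (hpN : 0 < pN) (hpS : 0 < pS)
    (LN LS EN ES cN cS bp bm β : ℝ)
    (hLN : LN = pN + R) (hLS : LS = pS + R)
    (hEN : EN = pN / (γ - 1) + ρN * vN ^ 2 / 2)
    (hES : ES = pS / (γ - 1) + ρS * vS ^ 2 / 2)
    (hcN : cN = Real.sqrt (γ * pN / ρN)) (hcS : cS = Real.sqrt (γ * pS / ρS))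
    (hbp : bp = max (vN + cN) (max (vS + cS) 0))
    (hbm : bm = min (vN - cN) (min (vS - cS) 0))
    (hβ : β = bp * bm / (bp - bm))
    -- anti-diffusion term for the momentum component
    (qstar2 δmv : ℝ)
    (hqstar2 : qstar2 = (bp * (ρS * vS) - bm * (ρN * vN) -
      ((ρS * vS ^ 2 + LS) - (ρN * vN ^ 2 + LN))) / (bp - bm))
    (hδmv : δmv = minmod2 (ρS * vS - qstar2) (qstar2 - ρN * vN))
    -- motionless data
    (hvN : vN = 0) (hvS : vS = 0) :
    -- equal one-sided speeds
    bp = max cN cS ∧ bm = -max cN cS ∧ 0 < bp ∧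
    -- the anti-diffusion term vanishes
    δmv = 0 ∧
    -- the unmodified flux reduces to the arithmetic mean of the equilibrium values
    ((bp * (ρN * vN ^ 2 + LN) - bm * (ρS * vS ^ 2 + LS)) / (bp - bm) +
      β * (ρS * vS - ρN * vN - δmv) = (LN + LS) / 2) ∧
    -- hence the semi-discrete momentum equation becomes
    -- d(ρ̄v)_k/dt = −[(L^S_{k+1} + L^N_k) − (L^S_k + L^N_{k−1})]/(2Δy)
    (∀ Δy : ℝ, 0 < Δy → ∀ LNs LSs Gf : ℤ → ℝ,
      (∀ k, Gf k = (LNs k + LSs (k + 1)) / 2) →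
      ∀ k : ℤ, -(Gf k - Gf (k - 1)) / Δy
        = -((LSs (k + 1) + LNs k) - (LSs k + LNs (k - 1))) / (2 * Δy)) ∧
    -- which is in general nonzero when L is not locally constant
    (∀ Δy : ℝ, 0 < Δy → ∃ (LNs LSs : ℤ → ℝ) (k : ℤ),
      -((LNs k + LSs (k + 1)) / 2 - (LNs (k - 1) + LSs k) / 2) / Δy ≠ 0) := by
  have hcN0 : 0 < cN := by
    rw [hcN]; exact Real.sqrt_pos.mpr (by positivity)
  have hcS0 : 0 < cS := by
    rw [hcS]; exact Real.sqrt_pos.mpr (by positivity)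
  set M := max cN cS with hM
  have hM0 : 0 < M := lt_of_lt_of_le hcN0 (le_max_left _ _)
  have hbp' : bp = M := by
    rw [hbp, hvN, hvS, zero_add, zero_add, max_eq_left hcS0.le]
  have hbm' : bm = -M := by
    rw [hbm, hvN, hvS, zero_sub, zero_sub, min_eq_left (neg_nonpos.mpr hcS0.le), min_neg_neg]
  have hdiff : bp - bm = 2 * M := by rw [hbp', hbm']; ring
  have hq : qstar2 = (LN - LS) / (2 * M) := by
    rw [hqstar2, hvN, hvS, hdiff]; ring_nf
  have hδ0 : δmv = 0 := by
    rw [hδmv, hvN, hvS, mul_zero, mul_zero, zero_sub, sub_zero]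
    unfold minmod2
    rcases lt_trichotomy qstar2 0 with h | h | h
    · rw [if_neg (by push_neg; intro _; linarith), if_neg (by push_neg; intro h'; linarith)]
    · rw [h, neg_zero]
      rw [if_neg (by simp), if_neg (by simp)]
    · rw [if_neg (by push_neg; intro h'; linarith), if_neg (by push_neg; intro h'; linarith)]
  refine ⟨hbp', hbm', hbp' ▸ hM0, hδ0, ?_, ?_, ?_⟩
  · rw [hδ0, hvN, hvS, hbp', hbm']
    field_simp
    ring
  · intro Δy hΔy LNs LSs Gf hGf k
    rw [hGf, hGf]
    field_simp
    ring
  · intro Δy hΔy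
    refine ⟨fun k => (k : ℝ), fun _ => 0, 0, ?_⟩
    simp
    intro h
    linarith
end
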